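/- arXiv:1109.3890 — 5 statements merged into one kernel-verified Lean document; each statement's English description precedes it below -/
import Mathlib

section
/- Let α be a linear order, let (R_j)_{j ∈ J} be a family of pairwise disjoint order-convex subsets of α, and let a ≤ b in α. Then the set of indices j ∈ J such that Set.Icc a b ∩ R_j is nonempty and R_j is not contained in Set.Icc a b has at most 2 elements. -/
/-! A convex set that meets `[a, b]` without lying inside it must reach past one of the
endpoints, so by convexity it contains `a` or `b`. Each point lies in at most one set of a
disjoint family, so at most two sets can do this. -/

open Set Function

theorem Set.OrdConnected.left_mem_or_right_mem_of_not_subset_Icc {α : Type*} [LinearOrder α]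
    {s : Set α} {a b : α} (hs : s.OrdConnected) (hmeet : (Icc a b ∩ s).Nonempty)
    (hns : ¬ s ⊆ Icc a b) : a ∈ s ∨ b ∈ s := by
  obtain ⟨x, ⟨hax, hxb⟩, hxs⟩ := hmeet
  obtain ⟨y, hys, hy⟩ := not_subset.mp hns
  rcases not_and_or.mp hy with hya | hyb
  · exact Or.inl (hs.out hys hxs ⟨(not_le.mp hya).le, hax⟩)
  · exact Or.inr (hs.out hxs hys ⟨hxb, (not_le.mp hyb).le⟩)

theorem encard_setOf_mem_le_one_of_pairwise_disjoint {α J : Type*} {R : J → Set α}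
    (hdisj : Pairwise (Disjoint on R)) (c : α) : {j | c ∈ R j}.encard ≤ 1 :=
  encard_le_one_iff.mpr fun _ _ hi hj =>
    by_contra fun hne => (hdisj hne).le_bot ⟨hi, hj⟩

theorem partial_overlap_at_most_two_general {α : Type*} [LinearOrder α] {J : Type*}
    (R : J → Set α)
    (hconv : ∀ j, ∀ x ∈ R j, ∀ z ∈ R j, ∀ y, x ≤ y → y ≤ z → y ∈ R j)
    (hdisj : ∀ i j : J, i ≠ j → Disjoint (R i) (R j))
    (a b : α) :
    Set.encard {j : J | (Set.Icc a b ∩ R j).Nonempty ∧ ¬ R j ⊆ Set.Icc a b}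
      ≤ 2 := by
  have hord : ∀ j, (R j).OrdConnected := fun j =>
    ⟨fun _ hx _ hz _ hy => hconv j _ hx _ hz _ hy.1 hy.2⟩
  have hsub : {j : J | (Icc a b ∩ R j).Nonempty ∧ ¬ R j ⊆ Icc a b}
      ⊆ {j | a ∈ R j} ∪ {j | b ∈ R j} := fun j ⟨hmeet, hns⟩ =>
    (hord j).left_mem_or_right_mem_of_not_subset_Icc hmeet hns
  have hdisj' : Pairwise (Disjoint on R) := fun i j => hdisj i j
  calc _ ≤ ({j | a ∈ R j} ∪ {j | b ∈ R j}).encard := encard_mono hsub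
    _ ≤ {j | a ∈ R j}.encard + {j | b ∈ R j}.encard := encard_union_le _ _
    _ ≤ 1 + 1 := add_le_add (encard_setOf_mem_le_one_of_pairwise_disjoint hdisj' a)
        (encard_setOf_mem_le_one_of_pairwise_disjoint hdisj' b)
    _ = 2 := by norm_num

/-- Among pairwise disjoint order-convex sets, at most two can partially
overlap a given interval `Set.Icc a b` (meet it without being contained
in it). -/
theorem partial_overlap_at_most_two {α : Type*} [LinearOrder α] {J : Type*}
    (R : J → Set α)
    (hconv : ∀ j, ∀ x ∈ R j, ∀ z ∈ R j, ∀ y, x ≤ y → y ≤ z → y ∈ R j)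
    (hdisj : ∀ i j : J, i ≠ j → Disjoint (R i) (R j))
    (a b : α) (hab : a ≤ b) :
    Set.encard {j : J | (Set.Icc a b ∩ R j).Nonempty ∧ ¬ R j ⊆ Set.Icc a b}
      ≤ 2 :=
  partial_overlap_at_most_two_general R hconv hdisj a b
end

section
/- Let α be a type, let R_0 ⊆ R_1 ⊆ ⋯ ⊆ R_m be a nested chain of subsets of α (R_i ⊆ R_j whenever i ≤ j), let q ∈ R_0, let ι be a finite index set, let s : ι → Set α be a family of subsets of α, and let p : ι → ℕ be a priority function. Then the supremum of p over {i ∈ ι : q ∈ s i} (with value 0 on the empty set) equals the maximum of the following values: the supremum of p over {i : q ∈ s i and R_0 ⊄ s i}; for each j with 1 ≤ j ≤ m, the supremum of p over {i : R_{j-1} ⊆ s i and R_j ⊄ s i}; and the supremum of p over {i : R_m ⊆ s i}. -/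
/-!
Every set `S` stabbed by `q` is captured at exactly one node of the chain: at the root if it
does not contain `R 0`, at the leaf if it contains `R m`, and otherwise at the first `j` with
`R j ⊄ S`. Conversely every captured set is stabbed, since `q` lies in every node. So the
stabbed sets are the union of the captured ones, and the supremum splits accordingly.
-/

open Classical

theorem Nat.exists_mem_Icc_pred_and_not {P : ℕ → Prop} {m : ℕ} (h0 : P 0) (hm : ¬ P m) :
    ∃ j ∈ Finset.Icc 1 m, P (j - 1) ∧ ¬ P j := by
  induction m with
  | zero => exact absurd h0 hm
  | succ k ih =>
    by_cases hk : P k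
    · exact ⟨k + 1, Finset.mem_Icc.mpr ⟨by omega, le_rfl⟩, hk, hm⟩
    · obtain ⟨j, hj, hj'⟩ := ih hk
      exact ⟨j, Finset.Icc_subset_Icc_right k.le_succ hj, hj'⟩

section Chain

variable {α : Type*} {m : ℕ} {R : ℕ → Set α} {q : α}

theorem mem_iff_captured (hqR : ∀ k ≤ m, q ∈ R k) (S : Set α) :
    q ∈ S ↔ (q ∈ S ∧ ¬ R 0 ⊆ S) ∨
      (∃ j ∈ Finset.Icc 1 m, R (j - 1) ⊆ S ∧ ¬ R j ⊆ S) ∨ R m ⊆ S := by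
  constructor
  · intro hqS
    by_cases h0 : R 0 ⊆ S
    · by_cases hm : R m ⊆ S
      · exact .inr (.inr hm)
      · exact .inr (.inl (Nat.exists_mem_Icc_pred_and_not (P := (R · ⊆ S)) h0 hm))
    · exact .inl ⟨hqS, h0⟩
  · rintro (⟨hqS, -⟩ | ⟨j, hj, hsub, -⟩ | hsub)
    · exact hqS
    · exact hsub (hqR (j - 1) (by grind))
    · exact hsub (hqR m le_rfl)

theorem filter_mem_eq_union_captured (hqR : ∀ k ≤ m, q ∈ R k) {ι : Type*} [Fintype ι]
    (s : ι → Set α) :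
    Finset.univ.filter (fun i => q ∈ s i) =
      Finset.univ.filter (fun i => q ∈ s i ∧ ¬ R 0 ⊆ s i) ∪
        ((Finset.Icc 1 m).biUnion (fun j =>
            Finset.univ.filter (fun i => R (j - 1) ⊆ s i ∧ ¬ R j ⊆ s i)) ∪
          Finset.univ.filter (fun i => R m ⊆ s i)) := by
  ext i
  simpa [Finset.mem_union, Finset.mem_biUnion] using mem_iff_captured hqR (s i)

end Chain

/-- Correctness of the stabbing-max query: the highest priority among sets
stabbed by `q` is the maximum, over the nodes of a nested chain
`R 0 ⊆ ⋯ ⊆ R m` with `q ∈ R 0`, of the highest priority captured at each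
node, where suprema are taken in `ℕ` (value `0` on the empty set). -/
theorem stabbing_max_identity {α : Type*} (m : ℕ) (R : ℕ → Set α)
    (hmono : ∀ i j : ℕ, i ≤ j → j ≤ m → R i ⊆ R j)
    (q : α) (hq : q ∈ R 0) {ι : Type*} [Fintype ι]
    (s : ι → Set α) (p : ι → ℕ) :
    (Finset.univ.filter (fun i => q ∈ s i)).sup p =
      max ((Finset.univ.filter (fun i => q ∈ s i ∧ ¬ R 0 ⊆ s i)).sup p)
        (max
          ((Finset.Icc 1 m).sup (fun j =>
            (Finset.univ.filter
              (fun i => R (j - 1) ⊆ s i ∧ ¬ R j ⊆ s i)).sup p))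
          ((Finset.univ.filter (fun i => R m ⊆ s i)).sup p)) := by
  have hqR : ∀ k ≤ m, q ∈ R k := fun k hk => hmono 0 k k.zero_le hk hq
  rw [filter_mem_eq_union_captured hqR s, Finset.sup_union, Finset.sup_union,
    Finset.sup_biUnion]
end

section
/- Let α be a linear order, let R_0 ⊆ R_1 ⊆ ⋯ ⊆ R_m be a nested chain of subsets of α (R_i ⊆ R_j whenever i ≤ j) with R_0 order-convex, let q ∈ R_0, and let a ≤ b in α with q ∈ Set.Icc a b. Then at least one of the following holds: (i) a ∈ R_0 or b ∈ R_0; (ii) there exists i with 1 ≤ i ≤ m such that R_{i-1} ⊆ Set.Icc a b and R_i ⊄ Set.Icc a b; (iii) R_m ⊆ Set.Icc a b. -/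
/-! Since `R 0` is order-convex and contains `q ∈ [a, b]`, if neither endpoint lies in `R 0` then
all of `R 0` lies strictly between them, so `[a, b]` covers the leaf range. If it does not also
cover the root range `R m`, the first index whose range escapes `[a, b]` is the node sought. -/

theorem Set.OrdConnected.subset_Icc_of_notMem {α : Type*} [LinearOrder α] {s : Set α}
    (hs : s.OrdConnected) {q a b : α} (hq : q ∈ s) (hqab : q ∈ Set.Icc a b)
    (ha : a ∉ s) (hb : b ∉ s) : s ⊆ Set.Icc a b := by
  intro y hy
  constructor
  · by_contra! hya
    exact ha (hs.out hy hq ⟨hya.le, hqab.1⟩)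
  · by_contra! hyb
    exact hb (hs.out hq hy ⟨hqab.2, hyb.le⟩)

theorem Nat.exists_pred_and_not_of_zero_of_not {P : ℕ → Prop} {m : ℕ} (h0 : P 0) (hm : ¬ P m) :
    ∃ i, 1 ≤ i ∧ i ≤ m ∧ P (i - 1) ∧ ¬ P i := by
  induction m with
  | zero => exact absurd h0 hm
  | succ n ih =>
    by_cases hn : P n
    · exact ⟨n + 1, by omega, le_rfl, hn, hm⟩
    · obtain ⟨i, hi1, hin, hprev, hi⟩ := ih hn
      exact ⟨i, hi1, by omega, hprev, hi⟩

theorem stabbed_interval_captured_general {α : Type*} [LinearOrder α]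
    (m : ℕ) (R : ℕ → Set α)
    (hconv : ∀ x ∈ R 0, ∀ z ∈ R 0, ∀ y, x ≤ y → y ≤ z → y ∈ R 0)
    (q : α) (hq : q ∈ R 0)
    (a b : α) (hstab : q ∈ Set.Icc a b) :
    (a ∈ R 0 ∨ b ∈ R 0) ∨
    (∃ i : ℕ, 1 ≤ i ∧ i ≤ m ∧ R (i - 1) ⊆ Set.Icc a b ∧
      ¬ R i ⊆ Set.Icc a b) ∨
    R m ⊆ Set.Icc a b := by
  by_cases hend : a ∈ R 0 ∨ b ∈ R 0
  · exact Or.inl hend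
  obtain ⟨ha, hb⟩ := not_or.mp hend
  have hR0 : (R 0).OrdConnected := ⟨fun x hx z hz y hy => hconv x hx z hz y hy.1 hy.2⟩
  have hleaf : R 0 ⊆ Set.Icc a b := hR0.subset_Icc_of_notMem hq hstab ha hb
  by_cases hroot : R m ⊆ Set.Icc a b
  · exact Or.inr (Or.inr hroot)
  · exact Or.inr (Or.inl
      (Nat.exists_pred_and_not_of_zero_of_not (P := fun i => R i ⊆ Set.Icc a b) hleaf hroot))

/-- Every interval `Set.Icc a b` stabbed by a query point `q ∈ R 0` is
captured at some node of the search path: an endpoint lies in the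
order-convex leaf range `R 0`, or the interval covers some `R (i-1)` but
not `R i`, or it covers the root range `R m`. -/
theorem stabbed_interval_captured {α : Type*} [LinearOrder α]
    (m : ℕ) (R : ℕ → Set α)
    (hmono : ∀ i j : ℕ, i ≤ j → j ≤ m → R i ⊆ R j)
    (hconv : ∀ x ∈ R 0, ∀ z ∈ R 0, ∀ y, x ≤ y → y ≤ z → y ∈ R 0)
    (q : α) (hq : q ∈ R 0)
    (a b : α) (hab : a ≤ b) (hstab : q ∈ Set.Icc a b) :
    (a ∈ R 0 ∨ b ∈ R 0) ∨
    (∃ i : ℕ, 1 ≤ i ∧ i ≤ m ∧ R (i - 1) ⊆ Set.Icc a b ∧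
      ¬ R i ⊆ Set.Icc a b) ∨
    R m ⊆ Set.Icc a b :=
  stabbed_interval_captured_general m R hconv q hq a b hstab
end

section
/- Let α be a linear order, let d ≥ 1, fix a coordinate t ∈ Fin d, let q : Fin d → α, let ι be a finite index set, and for each s ∈ ι let a_s, b_s : Fin d → α, defining the box B_s = {x : Fin d → α | ∀ j, x j ∈ Set.Icc (a_s j) (b_s j)}. Let R_0 ⊆ R_1 ⊆ ⋯ ⊆ R_m be a nested chain of subsets of α with q t ∈ R_0. Then the set {s ∈ ι : q ∈ B_s} is equal to the union of the following m+2 pairwise disjoint sets: {s ∈ ι : q ∈ B_s and R_0 ⊄ Set.Icc (a_s t) (b_s t)}; for each i with 1 ≤ i ≤ m, {s ∈ ι : (∀ j ≠ t, q j ∈ Set.Icc (a_s j) (b_s j)) and R_{i-1} ⊆ Set.Icc (a_s t) (b_s t) and R_i ⊄ Set.Icc (a_s t) (b_s t)}; and {s ∈ ι : (∀ j ≠ t, q j ∈ Set.Icc (a_s j) (b_s j)) and R_m ⊆ Set.Icc (a_s t) (b_s t)}. -/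
open Classical

/-!
Fix a box and let `P k` say that the node range `R k` lies in its `t`-th side. Along the chain
`P` can only switch from true to false, so the box is captured at exactly one node: the first `k`
with `¬ P k`, or `m + 1` if there is none. Once `P` holds at some node, `q t ∈ R 0 ⊆ R k`
already lies in the `t`-th side, so the condition on the `t`-th coordinate of `q` may be dropped.
-/

section CoverLevel

variable {P : ℕ → Prop} {m i j : ℕ}

/-- `i` is the node at which a predicate `P` on the chain `0, …, m` first fails, with `m + 1`
standing for "never". -/
def IsCoverLevel (P : ℕ → Prop) (m i : ℕ) : Prop :=
  if i = 0 then ¬ P 0 else if i ≤ m then P (i - 1) ∧ ¬ P i else P m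

theorem exists_isCoverLevel (P : ℕ → Prop) (m : ℕ) : ∃ i < m + 2, IsCoverLevel P m i := by
  have hex : ∃ k, ¬ P k ∨ k = m + 1 := ⟨m + 1, Or.inr rfl⟩
  have hle : Nat.find hex ≤ m + 1 := Nat.find_min' hex (Or.inr rfl)
  have hprev (h : 0 < Nat.find hex) : P (Nat.find hex - 1) := by
    by_contra hP
    exact Nat.find_min hex (by omega) (Or.inl hP)
  refine ⟨Nat.find hex, by omega, ?_⟩
  unfold IsCoverLevel
  split_ifs with h0 hm
  · simpa [h0] using Nat.find_spec hex
  · exact ⟨hprev (by omega), (Nat.find_spec hex).resolve_right (by omega)⟩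
  · simpa [show Nat.find hex = m + 1 by omega] using hprev (by omega)

theorem IsCoverLevel.not_of_le (h : IsCoverLevel P m i) (hi : i ≤ m) : ¬ P i := by
  unfold IsCoverLevel at h
  split_ifs at h with h0
  · exact h0 ▸ h
  · exact h.2

theorem IsCoverLevel.of_sub_one (h : IsCoverLevel P m j) (hj : 0 < j) (hjm : j < m + 2) :
    P (j - 1) := by
  unfold IsCoverLevel at h
  split_ifs at h with h0 hm
  · omega
  · exact h.1
  · rwa [show j - 1 = m by omega]

theorem IsCoverLevel.eq_of_antitone (hP : ∀ i j, i ≤ j → j ≤ m → P j → P i)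
    (hi : IsCoverLevel P m i) (him : i < m + 2) (hj : IsCoverLevel P m j) (hjm : j < m + 2) :
    i = j := by
  by_contra hne
  wlog hlt : i < j generalizing i j
  · exact this hj hjm hi him (Ne.symm hne) (by omega)
  exact hi.not_of_le (by omega)
    (hP i (j - 1) (by omega) (by omega) (hj.of_sub_one (by omega) hjm))

end CoverLevel

theorem stabbed_boxes_decomposition_general {α : Type*} [LinearOrder α]
    {d : ℕ} (t : Fin d) (q : Fin d → α)
    {ι : Type*} [Fintype ι] (a b : ι → Fin d → α)
    (m : ℕ) (R : ℕ → Set α)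
    (hmono : ∀ i j : ℕ, i ≤ j → j ≤ m → R i ⊆ R j)
    (hq : q t ∈ R 0) :
    let C : ℕ → Finset ι := fun i =>
      if i = 0 then
        Finset.univ.filter (fun s =>
          (∀ j, q j ∈ Set.Icc (a s j) (b s j)) ∧
          ¬ R 0 ⊆ Set.Icc (a s t) (b s t))
      else if i ≤ m then
        Finset.univ.filter (fun s =>
          (∀ j, j ≠ t → q j ∈ Set.Icc (a s j) (b s j)) ∧
          R (i - 1) ⊆ Set.Icc (a s t) (b s t) ∧
          ¬ R i ⊆ Set.Icc (a s t) (b s t))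
      else
        Finset.univ.filter (fun s =>
          (∀ j, j ≠ t → q j ∈ Set.Icc (a s j) (b s j)) ∧
          R m ⊆ Set.Icc (a s t) (b s t))
    (Finset.univ.filter (fun s => ∀ j, q j ∈ Set.Icc (a s j) (b s j)) =
        (Finset.range (m + 2)).biUnion C) ∧
      (∀ i < m + 2, ∀ j < m + 2, i ≠ j → Disjoint (C i) (C j)) := by
  intro C
  let Covers (s : ι) (k : ℕ) : Prop := R k ⊆ Set.Icc (a s t) (b s t)
  have hstab {s k} (hk : k ≤ m) (hcov : Covers s k) :
      (∀ j, j ≠ t → q j ∈ Set.Icc (a s j) (b s j)) ↔ ∀ j, q j ∈ Set.Icc (a s j) (b s j) :=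
    ⟨fun h => (and_forall_ne t).1 ⟨hcov (hmono 0 k k.zero_le hk hq), h⟩, fun h j _ => h j⟩
  have hmemC (i s) : s ∈ C i ↔
      (∀ j, q j ∈ Set.Icc (a s j) (b s j)) ∧ IsCoverLevel (Covers s) m i := by
    simp only [C, IsCoverLevel]
    split_ifs with h0 hm
    all_goals simp only [Finset.mem_filter, Finset.mem_univ, true_and]
    · exact Iff.rfl
    · exact and_congr_left fun h => hstab (by omega) h.1
    · exact and_congr_left (hstab le_rfl)
  have hanti (s) : ∀ i j, i ≤ j → j ≤ m → Covers s j → Covers s i :=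
    fun i j hij hjm => (hmono i j hij hjm).trans
  refine ⟨?_, fun i hi j hj hij => Finset.disjoint_left.2 fun s hsi hsj => hij ?_⟩
  · ext s
    simp only [Finset.mem_filter, Finset.mem_univ, true_and, Finset.mem_biUnion,
      Finset.mem_range, hmemC]
    exact ⟨fun hs => (exists_isCoverLevel (Covers s) m).imp fun _ ⟨hi, hl⟩ => ⟨hi, hs, hl⟩,
      fun ⟨_, _, hs, _⟩ => hs⟩
  · exact ((hmemC i s).1 hsi).2.eq_of_antitone (hanti s) hi ((hmemC j s).1 hsj).2 hj

/-- Decomposition for `d`-dimensional stabbing: building the search path on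
coordinate `t`, the boxes stabbed by `q` decompose as a disjoint union over
the nodes of a nested chain `R 0 ⊆ ⋯ ⊆ R m` with `q t ∈ R 0`. -/
theorem stabbed_boxes_decomposition {α : Type*} [LinearOrder α]
    {d : ℕ} (hd : 1 ≤ d) (t : Fin d) (q : Fin d → α)
    {ι : Type*} [Fintype ι] (a b : ι → Fin d → α)
    (m : ℕ) (R : ℕ → Set α)
    (hmono : ∀ i j : ℕ, i ≤ j → j ≤ m → R i ⊆ R j)
    (hq : q t ∈ R 0) :
    let C : ℕ → Finset ι := fun i =>
      if i = 0 then
        Finset.univ.filter (fun s =>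
          (∀ j, q j ∈ Set.Icc (a s j) (b s j)) ∧
          ¬ R 0 ⊆ Set.Icc (a s t) (b s t))
      else if i ≤ m then
        Finset.univ.filter (fun s =>
          (∀ j, j ≠ t → q j ∈ Set.Icc (a s j) (b s j)) ∧
          R (i - 1) ⊆ Set.Icc (a s t) (b s t) ∧
          ¬ R i ⊆ Set.Icc (a s t) (b s t))
      else
        Finset.univ.filter (fun s =>
          (∀ j, j ≠ t → q j ∈ Set.Icc (a s j) (b s j)) ∧
          R m ⊆ Set.Icc (a s t) (b s t))
    (Finset.univ.filter (fun s => ∀ j, q j ∈ Set.Icc (a s j) (b s j)) =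
        (Finset.range (m + 2)).biUnion C) ∧
      (∀ i < m + 2, ∀ j < m + 2, i ≠ j → Disjoint (C i) (C j)) :=
  stabbed_boxes_decomposition_general t q a b m R hmono hq
end

section
/- Let α be a linear order, let d ≥ 1, fix a coordinate t ∈ Fin d, let q : Fin d → α, let ι be a finite index set, for each s ∈ ι let a_s, b_s : Fin d → α define the box B_s = {x : Fin d → α | ∀ j, x j ∈ Set.Icc (a_s j) (b_s j)}, and let p : ι → ℕ be a priority function. Let R_0 ⊆ R_1 ⊆ ⋯ ⊆ R_m be a nested chain of subsets of α with q t ∈ R_0. Then the supremum of p over {s ∈ ι : q ∈ B_s} (with value 0 on the empty set) equals the maximum of: the supremum of p over {s : q ∈ B_s and R_0 ⊄ Set.Icc (a_s t) (b_s t)}; for each i with 1 ≤ i ≤ m, the supremum of p over {s : (∀ j ≠ t, q j ∈ Set.Icc (a_s j) (b_s j)) and R_{i-1} ⊆ Set.Icc (a_s t) (b_s t) and R_i ⊄ Set.Icc (a_s t) (b_s t)}; and the supremum of p over {s : (∀ j ≠ t, q j ∈ Set.Icc (a_s j) (b_s j)) and R_m ⊆ Set.Icc (a_s t) (b_s t)}.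 -/
/-! A box stabbed by `q` either fails to contain `R 0` in coordinate `t`, or contains `R m`
there, or there is an `i ∈ [1, m]` at which `R (i - 1)` is contained in its `t`-th interval but
`R i` is not. Conversely, since `q t ∈ R 0 ⊆ R i`, a box containing some `R i` in coordinate `t`
and containing `q` in the other coordinates is stabbed by `q`. So the stabbed boxes are the union
of the index sets of the right-hand side, and a supremum over a union is the maximum of the
suprema. -/

open Classical

theorem not_zero_or_exists_switch_or_holds_at (P : ℕ → Prop) (m : ℕ) :
    ¬ P 0 ∨ (∃ i ∈ Finset.Icc 1 m, P (i - 1) ∧ ¬ P i) ∨ P m := by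
  induction m with
  | zero => exact (Classical.em (P 0)).symm.imp_right Or.inr
  | succ m ih =>
    rcases ih with h0 | ⟨i, hi, hstep⟩ | hm
    · exact Or.inl h0
    · exact Or.inr <| Or.inl ⟨i, Finset.Icc_subset_Icc_right m.le_succ hi, hstep⟩
    · by_cases hm' : P (m + 1)
      · exact Or.inr <| Or.inr hm'
      · exact Or.inr <| Or.inl ⟨m + 1, by simp, hm, hm'⟩

theorem Finset.sup_filter_eq_max_of_iff {ι κ β : Type*} [Fintype ι] [SemilatticeSup β]
    [OrderBot β] (f : ι → β) (P A C : ι → Prop) (B : κ → ι → Prop) [DecidablePred P]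
    [DecidablePred A] [DecidablePred C] [∀ i, DecidablePred (B i)] (I : Finset κ)
    (h : ∀ s, P s ↔ A s ∨ (∃ i ∈ I, B i s) ∨ C s) :
    (univ.filter P).sup f =
      max ((univ.filter A).sup f)
        (max (I.sup fun i => (univ.filter (B i)).sup f) ((univ.filter C).sup f)) := by
  have hsplit : univ.filter P =
      univ.filter A ∪ (I.biUnion fun i => univ.filter (B i)) ∪ univ.filter C := by
    ext s
    simp [h]
  rw [hsplit, sup_union, sup_union, sup_biUnion, sup_assoc]

theorem forall_of_forall_ne {ι : Type*} {P : ι → Prop} {t : ι} (hne : ∀ j, j ≠ t → P j)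
    (ht : P t) (j : ι) : P j := by
  by_cases hj : j = t
  · exact hj ▸ ht
  · exact hne j hj

theorem stabbing_max_boxes_identity_general {α : Type*} [LinearOrder α]
    {d : ℕ} (t : Fin d) (q : Fin d → α)
    {ι : Type*} [Fintype ι] (a b : ι → Fin d → α) (p : ι → ℕ)
    (m : ℕ) (R : ℕ → Set α)
    (hmono : ∀ i j : ℕ, i ≤ j → j ≤ m → R i ⊆ R j)
    (hq : q t ∈ R 0) :
    (Finset.univ.filter
        (fun s => ∀ j, q j ∈ Set.Icc (a s j) (b s j))).sup p =
      max
        ((Finset.univ.filter (fun s =>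
          (∀ j, q j ∈ Set.Icc (a s j) (b s j)) ∧
          ¬ R 0 ⊆ Set.Icc (a s t) (b s t))).sup p)
        (max
          ((Finset.Icc 1 m).sup (fun i =>
            (Finset.univ.filter (fun s =>
              (∀ j, j ≠ t → q j ∈ Set.Icc (a s j) (b s j)) ∧
              R (i - 1) ⊆ Set.Icc (a s t) (b s t) ∧
              ¬ R i ⊆ Set.Icc (a s t) (b s t))).sup p))
          ((Finset.univ.filter (fun s =>
            (∀ j, j ≠ t → q j ∈ Set.Icc (a s j) (b s j)) ∧
            R m ⊆ Set.Icc (a s t) (b s t))).sup p)) := by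
  have hqR : ∀ i ≤ m, q t ∈ R i := fun i hi => hmono 0 i i.zero_le hi hq
  refine Finset.sup_filter_eq_max_of_iff p _ _ _ _ _ fun s => ⟨fun hs => ?_, ?_⟩
  · rcases not_zero_or_exists_switch_or_holds_at (R · ⊆ Set.Icc (a s t) (b s t)) m with
      h0 | ⟨i, hi, hstep⟩ | hm
    · exact Or.inl ⟨hs, h0⟩
    · exact Or.inr <| Or.inl ⟨i, hi, fun j _ => hs j, hstep⟩
    · exact Or.inr <| Or.inr ⟨fun j _ => hs j, hm⟩
  · rintro (⟨hs, -⟩ | ⟨i, hi, hne, hsub, -⟩ | ⟨hne, hsub⟩)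
    · exact hs
    · have hi := Finset.mem_Icc.mp hi
      exact forall_of_forall_ne hne (hsub (hqR (i - 1) (by omega)))
    · exact forall_of_forall_ne hne (hsub (hqR m le_rfl))

/-- Correctness of the `d`-dimensional stabbing-max query procedure: the
highest priority among boxes stabbed by `q` equals the maximum, over the
nodes of a nested chain `R 0 ⊆ ⋯ ⊆ R m` (built on coordinate `t`, with
`q t ∈ R 0`), of the lower-dimensional answers at those nodes. Suprema are
taken in `ℕ` (value `0` on the empty set). -/
theorem stabbing_max_boxes_identity {α : Type*} [LinearOrder α]
    {d : ℕ} (hd : 1 ≤ d) (t : Fin d) (q : Fin d → α)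
    {ι : Type*} [Fintype ι] (a b : ι → Fin d → α) (p : ι → ℕ)
    (m : ℕ) (R : ℕ → Set α)
    (hmono : ∀ i j : ℕ, i ≤ j → j ≤ m → R i ⊆ R j)
    (hq : q t ∈ R 0) :
    (Finset.univ.filter
        (fun s => ∀ j, q j ∈ Set.Icc (a s j) (b s j))).sup p =
      max
        ((Finset.univ.filter (fun s =>
          (∀ j, q j ∈ Set.Icc (a s j) (b s j)) ∧
          ¬ R 0 ⊆ Set.Icc (a s t) (b s t))).sup p)
        (max
          ((Finset.Icc 1 m).sup (fun i =>
            (Finset.univ.filter (fun s =>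
              (∀ j, j ≠ t → q j ∈ Set.Icc (a s j) (b s j)) ∧
              R (i - 1) ⊆ Set.Icc (a s t) (b s t) ∧
              ¬ R i ⊆ Set.Icc (a s t) (b s t))).sup p))
          ((Finset.univ.filter (fun s =>
            (∀ j, j ≠ t → q j ∈ Set.Icc (a s j) (b s j)) ∧
            R m ⊆ Set.Icc (a s t) (b s t))).sup p)) :=
  stabbing_max_boxes_identity_general t q a b p m R hmono hq
end
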